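/- Fix n ≥ 1, a constant real symmetric invertible n×n matrix a^{μν}, and Λ > 0. On the open set U := { k ∈ ℝⁿ : 1 + a^{μν} k_μ k_ν / Λ² > 0 } define the smooth vector fields (given by their components in the ∂/∂k_λ basis): 𝒯_S^α with λ-component √(1 + k̄²/Λ²) δ^α_λ, where k̄² := a^{μν} k_μ k_ν, and 𝒥^{μν} with λ-component k_ρ ( δ^ν_λ a^{μρ} − δ^μ_λ a^{νρ} ). Then the Lie brackets satisfy [𝒯_S^α, 𝒯_S^β] = (1/Λ²) 𝒥^{αβ} and [𝒯_S^α, 𝒥^{βγ}] = a^{αβ} 𝒯_S^γ − a^{αγ} 𝒯_S^β for all indices α, β, γ. -/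

import Mathlib

open scoped BigOperators

/-- Partial derivative `∂/∂k_σ` of a function on momentum space `ℝⁿ`. -/
noncomputable def dK {n : ℕ} (σ : Fin n) (f : (Fin n → ℝ) → ℝ) (k : Fin n → ℝ) : ℝ :=
  fderiv ℝ f k (Pi.single σ 1)

/-- `λ`-component of the Lie bracket of two vector fields on momentum space:
`[X,Y]_λ = X_σ ∂Y_λ/∂k_σ − Y_σ ∂X_λ/∂k_σ`. -/
noncomputable def lieBr {n : ℕ} (X Y : (Fin n → ℝ) → Fin n → ℝ)
    (k : Fin n → ℝ) (lam : Fin n) : ℝ :=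
  ∑ σ, X k σ * dK σ (fun k' => Y k' lam) k - ∑ σ, Y k σ * dK σ (fun k' => X k' lam) k

/-- Squared momentum norm `k̄² = a^{μν} k_μ k_ν`. -/
noncomputable def kb2 {n : ℕ} (a : Fin n → Fin n → ℝ) (k : Fin n → ℝ) : ℝ :=
  ∑ μ, ∑ ν, a μ ν * k μ * k ν

/-- Snyder translation generators `𝒯_S^α` with `λ`-component `√(1 + k̄²/Λ²) δ^α_λ`. -/
noncomputable def TS {n : ℕ} (a : Fin n → Fin n → ℝ) (Λ : ℝ) (α : Fin n)
    (k : Fin n → ℝ) (lam : Fin n) : ℝ :=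
  Real.sqrt (1 + kb2 a k / Λ ^ 2) * (if α = lam then 1 else 0)

/-- Lorentz generators `𝒥^{μν}` with `λ`-component `k_ρ (δ^ν_λ a^{μρ} − δ^μ_λ a^{νρ})`. -/
noncomputable def Jgen {n : ℕ} (a : Fin n → Fin n → ℝ) (μ ν : Fin n)
    (k : Fin n → ℝ) (lam : Fin n) : ℝ :=
  ∑ ρ, k ρ * ((if ν = lam then 1 else 0) * a μ ρ - (if μ = lam then 1 else 0) * a ν ρ)


noncomputable def prj {n : ℕ} (i : Fin n) : (Fin n → ℝ) →L[ℝ] ℝ :=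
  ContinuousLinearMap.proj i

lemma kb2_hasFDerivAt {n : ℕ} (a : Fin n → Fin n → ℝ) (k : Fin n → ℝ) :
    HasFDerivAt (kb2 a) (∑ μ, ∑ ν, (a μ ν) • ((k μ) • prj ν + (k ν) • prj μ)) k := by
  unfold kb2
  apply HasFDerivAt.fun_sum
  intro μ _
  apply HasFDerivAt.fun_sum
  intro ν _
  have h := (((prj (n := n) μ).hasFDerivAt (x := k)).mul
      ((prj (n := n) ν).hasFDerivAt (x := k))).const_mul (a μ ν)
  simpa [prj, mul_assoc] using h

lemma eval_D {n : ℕ} (a : Fin n → Fin n → ℝ) (hasym : ∀ μ ν, a μ ν = a ν μ)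
    (k : Fin n → ℝ) (σ : Fin n) :
    (∑ μ, ∑ ν, (a μ ν) • ((k μ) • prj ν + (k ν) • prj μ)) (Pi.single σ 1)
      = 2 * ∑ ν, a σ ν * k ν := by
  simp only [ContinuousLinearMap.coe_sum', Finset.sum_apply, ContinuousLinearMap.add_apply,
    ContinuousLinearMap.coe_smul', Pi.smul_apply, prj, ContinuousLinearMap.proj_apply,
    Pi.single_apply, smul_eq_mul]
  have h1 : ∑ x : Fin n, ∑ x1 : Fin n, (if x1 = σ then a x x1 * k x else 0)
      = ∑ x : Fin n, a x σ * k x := by simp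
  have h2 : ∑ x : Fin n, ∑ x1 : Fin n, (if x = σ then a x x1 * k x1 else 0)
      = ∑ x1 : Fin n, a σ x1 * k x1 := by rw [Finset.sum_comm]; simp
  calc (∑ x : Fin n, ∑ x1 : Fin n,
        a x x1 * (k x * (if x1 = σ then 1 else 0) + k x1 * (if x = σ then 1 else 0)))
      = ∑ x : Fin n, ∑ x1 : Fin n,
        ((if x1 = σ then a x x1 * k x else 0) + (if x = σ then a x x1 * k x1 else 0)) := by
        refine Finset.sum_congr rfl fun x _ => Finset.sum_congr rfl fun x1 _ => ?_
        split_ifs <;> ring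
    _ = 2 * ∑ ν, a σ ν * k ν := by
        simp only [Finset.sum_add_distrib, h1, h2]
        have h3 : ∑ x : Fin n, a x σ * k x = ∑ x : Fin n, a σ x * k x :=
          Finset.sum_congr rfl fun x _ => by rw [hasym]
        rw [h3]; ring

lemma dK_sqrt {n : ℕ} (a : Fin n → Fin n → ℝ) (hasym : ∀ μ ν, a μ ν = a ν μ)
    (Λ : ℝ) (hΛ : Λ ≠ 0) (k : Fin n → ℝ) (hk : 0 < 1 + kb2 a k / Λ ^ 2) (σ : Fin n) :
    dK σ (fun k' => Real.sqrt (1 + kb2 a k' / Λ ^ 2)) k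
      = (∑ ν, a σ ν * k ν) / (Λ ^ 2 * Real.sqrt (1 + kb2 a k / Λ ^ 2)) := by
  have hΛ2 : (Λ : ℝ) ^ 2 ≠ 0 := pow_ne_zero 2 hΛ
  have hg : HasFDerivAt (fun k' => 1 + kb2 a k' / Λ ^ 2)
      (((Λ ^ 2)⁻¹ : ℝ) • (∑ μ, ∑ ν, (a μ ν) • ((k μ) • prj ν + (k ν) • prj μ))) k := by
    simpa [div_eq_inv_mul, smul_smul] using
      ((kb2_hasFDerivAt a k).const_smul ((Λ ^ 2)⁻¹ : ℝ)).const_add 1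
  have hs := hg.sqrt (ne_of_gt hk)
  rw [dK, hs.fderiv]
  have hsne : Real.sqrt (1 + kb2 a k / Λ ^ 2) ≠ 0 := ne_of_gt (Real.sqrt_pos.mpr hk)
  simp only [ContinuousLinearMap.coe_smul', Pi.smul_apply, smul_eq_mul,
    eval_D a hasym k σ]
  field_simp

lemma dK_TS {n : ℕ} (a : Fin n → Fin n → ℝ) (hasym : ∀ μ ν, a μ ν = a ν μ)
    (Λ : ℝ) (hΛ : Λ ≠ 0) (k : Fin n → ℝ) (hk : 0 < 1 + kb2 a k / Λ ^ 2)
    (α lam σ : Fin n) :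
    dK σ (fun k' => TS a Λ α k' lam) k
      = (if α = lam then 1 else 0)
        * ((∑ ν, a σ ν * k ν) / (Λ ^ 2 * Real.sqrt (1 + kb2 a k / Λ ^ 2))) := by
  unfold TS
  by_cases h : α = lam
  · simpa [h] using dK_sqrt a hasym Λ hΛ k hk σ
  · simp [h, dK]

lemma dK_Jgen {n : ℕ} (a : Fin n → Fin n → ℝ) (β γ lam σ : Fin n) (k : Fin n → ℝ) :
    dK σ (fun k' => Jgen a β γ k' lam) k
      = (if γ = lam then 1 else 0) * a β σ - (if β = lam then 1 else 0) * a γ σ := by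
  have h : HasFDerivAt (fun k' : Fin n → ℝ => Jgen a β γ k' lam)
      (∑ ρ, ((if γ = lam then (1:ℝ) else 0) * a β ρ
          - (if β = lam then 1 else 0) * a γ ρ) • prj ρ) k := by
    unfold Jgen
    apply HasFDerivAt.fun_sum
    intro ρ _
    have := ((prj (n := n) ρ).hasFDerivAt (x := k)).mul_const
      ((if γ = lam then (1:ℝ) else 0) * a β ρ - (if β = lam then 1 else 0) * a γ ρ)
    simpa [prj] using this
  rw [dK, h.fderiv]
  simp [prj, Pi.single_apply, mul_ite, Finset.sum_ite_eq']

/-- The Snyder translation and Lorentz generators satisfy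
`[𝒯_S^α, 𝒯_S^β] = 𝒥^{αβ}/Λ²` and `[𝒯_S^α, 𝒥^{βγ}] = a^{αβ} 𝒯_S^γ − a^{αγ} 𝒯_S^β`
on `U = {k : 1 + k̄²/Λ² > 0}`. -/
theorem snyder_algebra {n : ℕ} (hn : 0 < n)
    (a : Fin n → Fin n → ℝ)
    (hasym : ∀ μ ν, a μ ν = a ν μ)
    (hainv : IsUnit (Matrix.of a))
    (Λ : ℝ) (hΛ : 0 < Λ) :
    ∀ (k : Fin n → ℝ), 0 < 1 + kb2 a k / Λ ^ 2 →
      (∀ (α β lam : Fin n),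
        lieBr (fun k' => TS a Λ α k') (fun k' => TS a Λ β k') k lam
          = (1 / Λ ^ 2) * Jgen a α β k lam) ∧
      (∀ (α β γ lam : Fin n),
        lieBr (fun k' => TS a Λ α k') (fun k' => Jgen a β γ k') k lam
          = a α β * TS a Λ γ k lam - a α γ * TS a Λ β k lam) := by
  intro k hk
  have hΛ0 : Λ ≠ 0 := ne_of_gt hΛ
  have hΛ2 : (Λ : ℝ) ^ 2 ≠ 0 := pow_ne_zero 2 hΛ0
  set s := Real.sqrt (1 + kb2 a k / Λ ^ 2) with hs
  have hsne : s ≠ 0 := ne_of_gt (Real.sqrt_pos.mpr hk)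
  constructor
  · intro α β lam
    unfold lieBr
    simp only [dK_TS a hasym Λ hΛ0 k hk _ lam]
    unfold TS Jgen
    rw [← hs]
    have collapse : ∀ μ1 μ2 : Fin n,
        (∑ σ, Real.sqrt (1 + kb2 a k / Λ ^ 2) * (if μ1 = σ then 1 else 0)
          * ((if μ2 = lam then 1 else 0)
            * ((∑ ν, a σ ν * k ν) / (Λ ^ 2 * s))))
        = s * ((if μ2 = lam then 1 else 0) * ((∑ ν, a μ1 ν * k ν) / (Λ ^ 2 * s))) := by
      intro μ1 μ2
      rw [← hs]
      simp [mul_ite, ite_mul, Finset.sum_ite_eq]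
    rw [collapse α β, collapse β α]
    have hJ : (∑ ρ, k ρ * ((if β = lam then (1:ℝ) else 0) * a α ρ
          - (if α = lam then 1 else 0) * a β ρ))
        = (if β = lam then (1:ℝ) else 0) * (∑ ν, a α ν * k ν)
          - (if α = lam then 1 else 0) * (∑ ν, a β ν * k ν) := by
      rw [Finset.mul_sum, Finset.mul_sum, ← Finset.sum_sub_distrib]
      exact Finset.sum_congr rfl fun ρ _ => by ring
    rw [hJ]
    split_ifs <;> field_simp <;> ring
  · intro α β γ lam
    unfold lieBr
    simp only [dK_TS a hasym Λ hΛ0 k hk α lam, dK_Jgen a β γ lam]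
    have first : (∑ σ, TS a Λ α k σ * ((if γ = lam then (1:ℝ) else 0) * a β σ
          - (if β = lam then 1 else 0) * a γ σ))
        = s * ((if γ = lam then (1:ℝ) else 0) * a β α
          - (if β = lam then 1 else 0) * a γ α) := by
      unfold TS
      rw [← hs]
      simp [mul_ite, ite_mul, mul_sub, Finset.sum_ite_eq]
    have hzero : (∑ σ, Jgen a β γ k σ * (∑ ν, a σ ν * k ν)) = 0 := by
      unfold Jgen
      have expand : ∀ σ : Fin n,
          (∑ ρ, k ρ * ((if γ = σ then (1:ℝ) else 0) * a β ρ
              - (if β = σ then 1 else 0) * a γ ρ)) * (∑ ν, a σ ν * k ν)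
          = (if γ = σ then (1:ℝ) else 0) * ((∑ ρ, k ρ * a β ρ) * (∑ ν, a σ ν * k ν))
            - (if β = σ then 1 else 0) * ((∑ ρ, k ρ * a γ ρ) * (∑ ν, a σ ν * k ν)) := by
        intro σ
        have h1 : (∑ ρ, k ρ * ((if γ = σ then (1:ℝ) else 0) * a β ρ
              - (if β = σ then 1 else 0) * a γ ρ))
            = (if γ = σ then (1:ℝ) else 0) * (∑ ρ, k ρ * a β ρ)
              - (if β = σ then 1 else 0) * (∑ ρ, k ρ * a γ ρ) := by
          rw [Finset.mul_sum, Finset.mul_sum, ← Finset.sum_sub_distrib]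
          exact Finset.sum_congr rfl fun ρ _ => by ring
        rw [h1]; ring
      rw [Finset.sum_congr rfl fun σ _ => expand σ, Finset.sum_sub_distrib]
      simp only [ite_mul, one_mul, zero_mul, Finset.sum_ite_eq, Finset.mem_univ, if_true]
      have hb : (∑ ρ, k ρ * a β ρ) = ∑ ν, a β ν * k ν :=
        Finset.sum_congr rfl fun ρ _ => by ring
      have hc : (∑ ρ, k ρ * a γ ρ) = ∑ ν, a γ ν * k ν :=
        Finset.sum_congr rfl fun ρ _ => by ring
      rw [hb, hc]; ring
    have second : (∑ σ, Jgen a β γ k σ * ((if α = lam then (1:ℝ) else 0)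
          * ((∑ ν, a σ ν * k ν) / (Λ ^ 2 * s)))) = 0 := by
      have : (∑ σ, Jgen a β γ k σ * ((if α = lam then (1:ℝ) else 0)
            * ((∑ ν, a σ ν * k ν) / (Λ ^ 2 * s))))
          = ((if α = lam then (1:ℝ) else 0) / (Λ ^ 2 * s))
            * (∑ σ, Jgen a β γ k σ * (∑ ν, a σ ν * k ν)) := by
        rw [Finset.mul_sum]
        exact Finset.sum_congr rfl fun σ _ => by ring
      rw [this, hzero, mul_zero]
    rw [first, second]
    unfold TS
    rw [← hs]
    rw [hasym β α, hasym γ α]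
    ring
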